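/- arXiv:2405.18698 — 4 statements merged into one kernel-verified Lean document; each statement's English description precedes it below -/
import Mathlib

section
/- For α ∈ [0,1) and an integrable random variable X, CVaR_α(X) = inf over β ∈ ℝ of E[(X - β)₊/(1-α)] + β, where CVaR_α(X) = (1/(1-α)) ∫_α¹ F_X⁻¹(u) du. -/
open MeasureTheory Set

/-- The (left-continuous) quantile function of a distribution `μ` on `ℝ`. -/
noncomputable def quantile (μ : Measure ℝ) (u : ℝ) : ℝ :=
  sInf {x | u ≤ (μ (Iic x)).toReal}

/-!
By the quantile transform, `X` has the law of `Q(U)` with `Q = F⁻¹` and `U` uniform on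
`(0, 1)`, so both sides become integrals over `(0, 1)`. Since `Q ≤ (Q - β)₊ + β`, for every `β`
`∫_α¹ Q ≤ ∫_0¹ (Q - β)₊ + (1 - α) β`. When `α > 0` this is an equality at `β = Q(α)`:
as `Q` is monotone, `(Q - β)₊` vanishes on `(0, α]` and equals `Q - β` on `(α, 1)`.
When `α = 0` the infimum is only approached: `E[(X - β)₊] + β = E[max X β] → E[X]` as
`β → -∞`, by dominated convergence.
-/

open Filter ProbabilityTheory
open scoped Topology ENNReal

section Quantile

variable (μ : Measure ℝ) [IsProbabilityMeasure μ] {u x : ℝ}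

lemma quantile_eq_sInf_cdf : quantile μ u = sInf {x | u ≤ cdf μ x} := by
  simp only [quantile, cdf_eq_real, measureReal_def]

lemma le_cdf_quantile (hu : u < 1) : u ≤ cdf μ (quantile μ u) := by
  have hne : {y | u ≤ cdf μ y}.Nonempty :=
    ((tendsto_cdf_atTop μ).eventually (eventually_ge_nhds hu)).exists
  rw [quantile_eq_sInf_cdf]
  refine ge_of_tendsto (((cdf μ).right_continuous _).mono Ioi_subset_Ici_self) ?_
  filter_upwards [self_mem_nhdsWithin] with y hy
  obtain ⟨z, hz, hzy⟩ := exists_lt_of_csInf_lt hne hy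
  exact hz.trans (monotone_cdf μ hzy.le)

lemma quantile_le_of_le_cdf (hu : 0 < u) (h : u ≤ cdf μ x) : quantile μ u ≤ x := by
  obtain ⟨x₀, hx₀⟩ := ((tendsto_cdf_atBot μ).eventually (eventually_lt_nhds hu)).exists
  rw [quantile_eq_sInf_cdf]
  refine csInf_le ⟨x₀, fun y hy => le_of_not_gt fun hyx => ?_⟩ h
  exact (hy.trans (monotone_cdf μ hyx.le)).not_gt hx₀

lemma quantile_le_iff (hu : u ∈ Ioo 0 1) : quantile μ u ≤ x ↔ u ≤ cdf μ x :=
  ⟨fun h => (le_cdf_quantile μ hu.2).trans (monotone_cdf μ h), quantile_le_of_le_cdf μ hu.1⟩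

lemma monotoneOn_quantile : MonotoneOn (quantile μ) (Ioo 0 1) := fun _ hu _ hv huv =>
  quantile_le_of_le_cdf μ hu.1 (huv.trans (le_cdf_quantile μ hv.2))

lemma aemeasurable_quantile : AEMeasurable (quantile μ) (volume.restrict (Ioo 0 1)) :=
  aemeasurable_restrict_of_monotoneOn measurableSet_Ioo (monotoneOn_quantile μ)

lemma map_quantile_volume : (volume.restrict (Ioo 0 1)).map (quantile μ) = μ := by
  refine (Measure.ext_of_Iic μ _ fun x => ?_).symm
  have hpre : quantile μ ⁻¹' Iic x ∩ Ioo 0 1 = Ioo 0 1 ∩ Iic (cdf μ x) := by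
    ext u
    simp only [mem_inter_iff, mem_preimage, mem_Iic]
    exact ⟨fun h => ⟨h.2, (quantile_le_iff μ h.2).1 h.1⟩,
      fun h => ⟨(quantile_le_iff μ h.1).2 h.2, h.1⟩⟩
  rw [Measure.map_apply_of_aemeasurable (aemeasurable_quantile μ) measurableSet_Iic,
    Measure.restrict_apply' measurableSet_Ioo, hpre,
    measure_congr (Ioo_ae_eq_Ioc.inter (ae_eq_refl (Iic (cdf μ x)))), Ioc_inter_Iic,
    Real.volume_Ioc, min_eq_right (cdf_le_one μ x), sub_zero, ofReal_cdf]

lemma integral_comp_quantile {g : ℝ → ℝ} (hg : AEStronglyMeasurable g μ) :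
    ∫ u in Ioo 0 1, g (quantile μ u) = ∫ x, g x ∂μ := by
  rw [← integral_map (aemeasurable_quantile μ) (by rwa [map_quantile_volume]),
    map_quantile_volume]

lemma integrableOn_quantile (hX : Integrable id μ) : IntegrableOn (quantile μ) (Ioo 0 1) := by
  rw [← map_quantile_volume μ] at hX
  exact (integrable_map_measure hX.aestronglyMeasurable (aemeasurable_quantile μ)).1 hX

end Quantile

section MaxSub

variable {X : Type*} [MeasurableSpace X] {μ : Measure X} {f : X → ℝ} {s t : Set X}

lemma setIntegral_le_setIntegral_max_sub_add (hst : s ⊆ t) (hf : IntegrableOn f t μ)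
    (ht : μ t ≠ ∞) (β : ℝ) :
    ∫ x in s, f x ∂μ ≤ ∫ x in t, max (f x - β) 0 ∂μ + μ.real s * β := by
  have hs : μ s ≠ ∞ := measure_ne_top_of_subset hst ht
  have hpos : IntegrableOn (fun x => max (f x - β) 0) t μ :=
    (hf.sub (integrableOn_const ht)).pos_part
  calc ∫ x in s, f x ∂μ ≤ ∫ x in s, (max (f x - β) 0 + β) ∂μ :=
        integral_mono (hf.mono_set hst) ((hpos.mono_set hst).add (integrableOn_const hs))
          fun x => sub_le_iff_le_add.1 (le_max_left _ _)
    _ = ∫ x in s, max (f x - β) 0 ∂μ + μ.real s * β := by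
        rw [integral_add (hpos.mono_set hst) (integrableOn_const hs), setIntegral_const,
          smul_eq_mul]
    _ ≤ ∫ x in t, max (f x - β) 0 ∂μ + μ.real s * β := by
        grw [setIntegral_mono_set hpos (ae_of_all _ fun x => le_max_right (f x - β) 0)
          hst.eventuallyLE]

lemma setIntegral_max_sub_add_eq (hs : MeasurableSet s) (ht : MeasurableSet t) (hst : s ⊆ t)
    (hf : IntegrableOn f t μ) (hμt : μ t ≠ ∞) {β : ℝ} (hlo : ∀ x ∈ t \ s, f x ≤ β)
    (hhi : ∀ x ∈ s, β ≤ f x) :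
    ∫ x in t, max (f x - β) 0 ∂μ + μ.real s * β = ∫ x in s, f x ∂μ := by
  have hμs : μ s ≠ ∞ := measure_ne_top_of_subset hst hμt
  rw [setIntegral_eq_of_subset_of_forall_sdiff_eq_zero ht hst
      fun x hx => max_eq_right (sub_nonpos.2 (hlo x hx)),
    setIntegral_congr_fun hs fun x hx => max_eq_left (sub_nonneg.2 (hhi x hx)),
    integral_sub (hf.mono_set hst) (integrableOn_const hμs), setIntegral_const, smul_eq_mul]
  ring

lemma tendsto_integral_max_sub_add_atBot [IsProbabilityMeasure μ] (hf : Integrable f μ) :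
    Tendsto (fun β => ∫ x, max (f x - β) 0 ∂μ + β) atBot (𝓝 (∫ x, f x ∂μ)) := by
  have hmax : ∀ β, ∫ x, max (f x - β) 0 ∂μ + β = ∫ x, max (f x) β ∂μ := fun β => by
    have hint : Integrable (fun x => max (f x - β) 0) μ := (hf.sub (integrable_const β)).pos_part
    calc ∫ x, max (f x - β) 0 ∂μ + β = ∫ x, (max (f x - β) 0 + β) ∂μ := by
          rw [integral_add hint (integrable_const β), integral_const, probReal_univ, one_smul]
      _ = ∫ x, max (f x) β ∂μ := by
          simp only [← max_add_add_right, sub_add_cancel, zero_add]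
  simp only [hmax]
  have hmeas : ∀ β, AEStronglyMeasurable (fun x => max (f x) β) μ := fun β =>
    (hf.aemeasurable.max aemeasurable_const).aestronglyMeasurable
  refine tendsto_integral_filter_of_dominated_convergence (fun x => |f x|)
    (Eventually.of_forall hmeas) ?_ hf.abs (ae_of_all _ fun x => tendsto_const_nhds.congr' ?_)
  · filter_upwards [eventually_le_atBot 0] with β hβ
    refine ae_of_all _ fun x => ?_
    rw [Real.norm_eq_abs]
    exact abs_le.2 ⟨le_max_of_le_left (neg_abs_le _),
      max_le (le_abs_self _) (hβ.trans (abs_nonneg _))⟩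
  · filter_upwards [eventually_le_atBot (f x)] with β hβ
    exact (max_eq_left hβ).symm

end MaxSub

/-- Rockafellar–Uryasev dual representation of CVaR:
`CVaR_α(X) = inf_β E[(X - β)₊/(1-α)] + β` with
`CVaR_α(X) = (1/(1-α)) ∫_α¹ F_X⁻¹(u) du`. -/
theorem stmt_3 (α : ℝ) (hα : α ∈ Set.Ico (0:ℝ) 1)
    (μ : Measure ℝ) [IsProbabilityMeasure μ] (hX : Integrable id μ) :
    IsGLB (Set.range fun β : ℝ => (∫ x, max (x - β) 0 / (1 - α) ∂μ) + β)
      ((1 / (1 - α)) * ∫ u in Set.Ioc α 1, quantile μ u) := by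
  obtain ⟨hα0, hα1⟩ := hα
  have hQ := integrableOn_quantile μ hX
  have hrepr (β : ℝ) : (∫ x, max (x - β) 0 / (1 - α) ∂μ) + β =
      ((∫ u in Ioo 0 1, max (quantile μ u - β) 0) + volume.real (Ioo α 1) * β) / (1 - α) := by
    rw [integral_div, ← integral_comp_quantile μ (by fun_prop),
      Real.volume_real_Ioo_of_le hα1.le]
    field_simp [(sub_pos.2 hα1).ne']
  rw [integral_Ioc_eq_integral_Ioo, one_div_mul_eq_div]
  refine ⟨?_, fun b hb => ?_⟩
  · rintro _ ⟨β, rfl⟩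
    dsimp only
    rw [hrepr]
    gcongr
    exact setIntegral_le_setIntegral_max_sub_add (Ioo_subset_Ioo_left hα0) hQ (by simp) β
  rcases hα0.eq_or_lt with rfl | hαpos
  · have hmean : ∫ u in Ioo 0 1, quantile μ u = ∫ x, x ∂μ :=
      integral_comp_quantile μ aestronglyMeasurable_id
    rw [hmean, sub_zero, div_one]
    refine ge_of_tendsto (tendsto_integral_max_sub_add_atBot hX) (Eventually.of_forall ?_)
    simpa using fun β => hb ⟨β, rfl⟩
  · refine (hb ⟨quantile μ α, rfl⟩).trans_eq ?_
    dsimp only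
    rw [hrepr, setIntegral_max_sub_add_eq measurableSet_Ioo measurableSet_Ioo
      (Ioo_subset_Ioo_left hα0) hQ (by simp)]
    · exact fun u hu => monotoneOn_quantile μ hu.1 ⟨hαpos, hα1⟩
        (not_lt.1 fun h => hu.2 ⟨h, hu.1.2⟩)
    · exact fun u hu => monotoneOn_quantile μ ⟨hαpos, hα1⟩ (Ioo_subset_Ioo_left hα0 hu)
        hu.1.le
end

section
/- Combining the two previous facts: if σ is an increasing nonnegative spectrum with ∫₀¹ σ = 1 and X has quantile function bounded in absolute value by C_max/(1-γ), then there exists a step-function spectrum σ̃ with M levels such that |R_σ(X) - R_σ̃(X)| ≤ C_max·σ(1)/((1-γ)·M). -/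
/-!
On `[0, 1]` the step sum with jumps `σ (i / M) - σ ((i - 1) / M)` at `i / M` telescopes to the
lower grid approximation `σ (⌊u M⌋ / M)`. On each cell `[k / M, (k + 1) / M]` the monotone `σ`
exceeds it by at most `σ ((k + 1) / M) - σ (k / M)`, so by a second telescoping the integral of the
gap is at most `(σ 1 - σ 0) / M`, and `|q| ≤ C` turns this into the bound on the difference of the
risks.
-/

open MeasureTheory Set

theorem add_sum_Icc_sub_mul_ite_le_eq_min (g : ℕ → ℝ) (k : ℕ) : ∀ n : ℕ,
    g 0 + ∑ i ∈ Finset.Icc 1 n, (g i - g (i - 1)) * (if i ≤ k then 1 else 0) = g (min k n)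
  | 0 => by simp
  | n + 1 => by
    rw [Finset.sum_Icc_succ_top (by omega), ← add_assoc, add_sum_Icc_sub_mul_ite_le_eq_min g k n,
      Nat.add_sub_cancel]
    by_cases h : n + 1 ≤ k
    · simp [h, Nat.min_eq_right (Nat.le_of_succ_le h)]
    · have : min k (n + 1) = min k n := by omega
      simp [h, this]

theorem natCast_div_le_iff_le_floor {M : ℕ} (hM : 0 < M) {u : ℝ} (hu : 0 ≤ u) (i : ℕ) :
    (i : ℝ) / M ≤ u ↔ i ≤ ⌊u * M⌋₊ := by
  rw [div_le_iff₀ (by positivity), Nat.le_floor_iff (by positivity)]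

theorem natCast_div_mem_Icc {k M : ℕ} (h : k ≤ M) : (k : ℝ) / M ∈ Icc (0 : ℝ) 1 :=
  ⟨by positivity, div_le_one_of_le₀ (by exact_mod_cast h) (by positivity)⟩

/-- The cap `M - 1` keeps `u = 1` on the last step, as the step sum has only `M - 1` jumps. -/
noncomputable def gridStep (σ : ℝ → ℝ) (M : ℕ) (u : ℝ) : ℝ := σ ((min ⌊u * M⌋₊ (M - 1) : ℕ) / M)

theorem gridStep_eq_add_sum {M : ℕ} (hM : 0 < M) (σ : ℝ → ℝ) {u : ℝ} (hu : 0 ≤ u) :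
    σ 0 + ∑ i ∈ Finset.Icc 1 (M - 1), (σ (i / M) - σ ((i - 1 : ℕ) / M)) *
      (if (i : ℝ) / M ≤ u then 1 else 0) = gridStep σ M u := by
  have := add_sum_Icc_sub_mul_ite_le_eq_min (fun k : ℕ => σ (k / M)) ⌊u * M⌋₊ (M - 1)
  simp only [Nat.cast_zero, zero_div] at this
  simp only [natCast_div_le_iff_le_floor hM hu, this, gridStep]

theorem monotoneOn_gridStep {σ : ℝ → ℝ} (hσ : MonotoneOn σ (Icc 0 1)) (M : ℕ) :
    MonotoneOn (gridStep σ M) (Icc 0 1) := by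
  intro u hu v hv huv
  apply hσ (natCast_div_mem_Icc (by omega)) (natCast_div_mem_Icc (by omega))
  gcongr

theorem gridStep_le {σ : ℝ → ℝ} (hσ : MonotoneOn σ (Icc 0 1)) {M : ℕ} (hM : 0 < M) {u : ℝ}
    (hu : u ∈ Icc (0 : ℝ) 1) : gridStep σ M u ≤ σ u :=
  hσ (natCast_div_mem_Icc (by omega)) hu
    ((natCast_div_le_iff_le_floor hM hu.1 _).2 (min_le_left _ _))

theorem sub_gridStep_le {σ : ℝ → ℝ} (hσ : MonotoneOn σ (Icc 0 1)) {M k : ℕ} (hk : k < M)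
    {u : ℝ} (hu : u ∈ Icc ((k : ℝ) / M) ((k + 1 : ℕ) / M)) :
    σ u - gridStep σ M u ≤ σ ((k + 1 : ℕ) / M) - σ (k / M) := by
  have hM : 0 < M := by omega
  have hu01 : u ∈ Icc (0 : ℝ) 1 :=
    ⟨(natCast_div_mem_Icc hk.le).1.trans hu.1, hu.2.trans (natCast_div_mem_Icc hk).2⟩
  have hkle : k ≤ min ⌊u * M⌋₊ (M - 1) :=
    le_min ((natCast_div_le_iff_le_floor hM hu01.1 k).1 hu.1) (by omega)
  have hupper : σ u ≤ σ ((k + 1 : ℕ) / M) := hσ hu01 (natCast_div_mem_Icc hk) hu.2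
  have hlower : σ (k / M) ≤ gridStep σ M u :=
    hσ (natCast_div_mem_Icc hk.le) (natCast_div_mem_Icc (by omega)) (by gcongr)
  linarith

theorem intervalIntegral_le_of_le_on_grid {F : ℝ → ℝ} {g : ℕ → ℝ} {M : ℕ} (hM : 0 < M)
    (hF : IntervalIntegrable F volume 0 1)
    (hle : ∀ k < M, ∀ u ∈ Icc ((k : ℝ) / M) ((k + 1 : ℕ) / M), F u ≤ g (k + 1) - g k) :
    ∫ u in (0 : ℝ)..1, F u ≤ (g M - g 0) / M := by
  have hsub : ∀ k < M, uIcc ((k : ℝ) / M) ((k + 1 : ℕ) / M) ⊆ uIcc 0 1 := fun k hk =>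
    uIcc_subset_uIcc (mem_uIcc_of_le (natCast_div_mem_Icc hk.le).1 (natCast_div_mem_Icc hk.le).2)
      (mem_uIcc_of_le (natCast_div_mem_Icc hk).1 (natCast_div_mem_Icc hk).2)
  have hsplit := intervalIntegral.sum_integral_adjacent_intervals (a := fun k : ℕ => (k : ℝ) / M)
    (n := M) (fun k hk => hF.mono_set (hsub k hk))
  simp only [Nat.cast_zero, zero_div, div_self (Nat.cast_ne_zero.2 hM.ne' : (M : ℝ) ≠ 0)] at hsplit
  rw [← hsplit, ← Finset.sum_range_sub, Finset.sum_div]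
  refine Finset.sum_le_sum fun k hk => ?_
  have hk := Finset.mem_range.1 hk
  calc ∫ u in (k : ℝ) / M..(k + 1 : ℕ) / M, F u
      ≤ ∫ u in (k : ℝ) / M..(k + 1 : ℕ) / M, (g (k + 1) - g k) :=
        intervalIntegral.integral_mono_on (by gcongr; omega) (hF.mono_set (hsub k hk))
          intervalIntegrable_const (hle k hk)
    _ = (g (k + 1) - g k) / M := by
        rw [intervalIntegral.integral_const, smul_eq_mul]
        field_simp
        push_cast
        ring

theorem abs_integral_mul_le_mul_integral {α : Type*} [MeasurableSpace α] {μ : Measure α}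
    {q f : α → ℝ} {C : ℝ} (hq : ∀ᵐ x ∂μ, |q x| ≤ C) (hqm : AEStronglyMeasurable q μ)
    (hf : Integrable f μ) (hf0 : 0 ≤ᵐ[μ] f) :
    |∫ x, q x * f x ∂μ| ≤ C * ∫ x, f x ∂μ := by
  rw [← integral_const_mul]
  refine abs_integral_le_integral_abs.trans (integral_mono_ae ?_ (hf.const_mul C) ?_)
  · exact (hf.bdd_mul hqm (by simpa using hq)).abs
  · filter_upwards [hq, hf0] with x hqx hfx
    rw [abs_mul, abs_of_nonneg hfx]
    exact mul_le_mul_of_nonneg_right hqx hfx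

theorem abs_setIntegral_mul_sub_gridStep_le {σ q : ℝ → ℝ} {C : ℝ} {M : ℕ} (hM : 0 < M)
    (hσ : MonotoneOn σ (Icc 0 1)) (hqm : AEStronglyMeasurable q (volume.restrict (Icc 0 1)))
    (hq : ∀ᵐ u ∂volume.restrict (Icc 0 1), |q u| ≤ C) (hC : 0 ≤ C) :
    |(∫ u in Icc (0 : ℝ) 1, q u * σ u) - ∫ u in Icc (0 : ℝ) 1, q u * gridStep σ M u| ≤
      C * ((σ 1 - σ 0) / M) := by
  have hσi : IntegrableOn σ (Icc 0 1) := hσ.integrableOn_isCompact isCompact_Icc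
  have hsi : IntegrableOn (gridStep σ M) (Icc 0 1) :=
    (monotoneOn_gridStep hσ M).integrableOn_isCompact isCompact_Icc
  have hdiff : ∫ u in Icc (0 : ℝ) 1, (σ u - gridStep σ M u) ≤ (σ 1 - σ 0) / M := by
    rw [integral_Icc_eq_integral_Ioc, ← intervalIntegral.integral_of_le zero_le_one]
    have hgrid := intervalIntegral_le_of_le_on_grid (g := fun k => σ (k / M)) hM
      ((intervalIntegrable_iff_integrableOn_Icc_of_le zero_le_one).2 (hσi.sub hsi))
      fun k hk u hu => sub_gridStep_le hσ hk hu
    simpa [div_self (Nat.cast_ne_zero.2 hM.ne' : (M : ℝ) ≠ 0)] using hgrid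
  have hnonneg : 0 ≤ᵐ[volume.restrict (Icc 0 1)] fun u => σ u - gridStep σ M u := by
    filter_upwards [ae_restrict_mem measurableSet_Icc] with u hu
    exact sub_nonneg.2 (gridStep_le hσ hM hu)
  rw [← integral_sub (hσi.bdd_mul hqm hq) (hsi.bdd_mul hqm hq)]
  simp_rw [← mul_sub]
  calc _ ≤ C * ∫ u in Icc (0 : ℝ) 1, (σ u - gridStep σ M u) :=
        abs_integral_mul_le_mul_integral hq hqm (hσi.sub hsi) hnonneg
    _ ≤ C * ((σ 1 - σ 0) / M) := by gcongr

theorem stmt_6_general (M : ℕ) (hM : 0 < M) (Cmax γ : ℝ)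
    (σ : ℝ → ℝ) (hσm : MonotoneOn σ (Set.Icc 0 1))
    (hσn : ∀ u ∈ Set.Icc (0:ℝ) 1, 0 ≤ σ u)
    (q : ℝ → ℝ) (hqmeas : Measurable q)
    (hq : ∀ᵐ u ∂(volume.restrict (Set.Icc (0:ℝ) 1)), |q u| ≤ Cmax / (1 - γ)) :
    ∃ (η a : ℕ → ℝ),
      (∀ i ∈ Finset.Icc 1 M, 0 ≤ η i) ∧
      (∀ i ∈ Finset.Icc 1 (M - 1), η i ≤ η (i + 1)) ∧
      (∀ i ∈ Finset.Icc 1 (M - 1), a i ∈ Set.Icc (0:ℝ) 1) ∧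
      (∀ i ∈ Finset.Icc 1 (M - 2), a i ≤ a (i + 1)) ∧
      |(∫ u in Set.Icc (0:ℝ) 1, q u * σ u) -
        ∫ u in Set.Icc (0:ℝ) 1, q u * (η 1 + ∑ i ∈ Finset.Icc 1 (M - 1),
          (η (i + 1) - η i) * (if a i ≤ u then (1:ℝ) else 0))| ≤
      Cmax * σ 1 / ((1 - γ) * M) := by
  have hC : 0 ≤ Cmax / (1 - γ) := by
    have : (ae (volume.restrict (Icc (0 : ℝ) 1))).NeBot := ae_restrict_neBot.2 (by simp)
    obtain ⟨u, hu⟩ := hq.exists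
    exact (abs_nonneg _).trans hu
  refine ⟨fun i => σ ((i - 1 : ℕ) / M), fun i => (i : ℝ) / M, fun i hi => ?_, fun i hi => ?_,
    fun i hi => ?_, fun i hi => ?_, ?_⟩
  any_goals simp only [Finset.mem_Icc] at hi
  · exact hσn _ (natCast_div_mem_Icc (by omega))
  · simp only [Nat.add_sub_cancel]
    exact hσm (natCast_div_mem_Icc (by omega)) (natCast_div_mem_Icc (by omega)) (by gcongr; omega)
  · exact natCast_div_mem_Icc (by omega)
  · dsimp only
    gcongr
    omega
  · calc _ = |(∫ u in Icc (0 : ℝ) 1, q u * σ u) - ∫ u in Icc (0 : ℝ) 1, q u * gridStep σ M u| := by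
          congr 2
          refine setIntegral_congr_fun measurableSet_Icc fun u hu => ?_
          rw [← gridStep_eq_add_sum hM σ hu.1]
          simp
      _ ≤ Cmax / (1 - γ) * ((σ 1 - σ 0) / M) :=
          abs_setIntegral_mul_sub_gridStep_le hM hσm hqmeas.aestronglyMeasurable hq hC
      _ ≤ Cmax / (1 - γ) * (σ 1 / M) := by gcongr; linarith [hσn 0 ⟨le_rfl, zero_le_one⟩]
      _ = Cmax * σ 1 / ((1 - γ) * M) := (mul_div_mul_comm _ _ _ _).symm

theorem stmt_6 (M : ℕ) (hM : 0 < M) (Cmax γ : ℝ) (hC : 0 < Cmax)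
    (hγ : γ ∈ Set.Ioo (0:ℝ) 1)
    (σ : ℝ → ℝ) (hσm : MonotoneOn σ (Set.Icc 0 1))
    (hσn : ∀ u ∈ Set.Icc (0:ℝ) 1, 0 ≤ σ u)
    (hσi : (∫ u in Set.Icc (0:ℝ) 1, σ u) = 1) (hσmeas : Measurable σ)
    (q : ℝ → ℝ) (hqmeas : Measurable q)
    (hq : ∀ᵐ u ∂(volume.restrict (Set.Icc (0:ℝ) 1)), |q u| ≤ Cmax / (1 - γ)) :
    ∃ (η a : ℕ → ℝ),
      (∀ i ∈ Finset.Icc 1 M, 0 ≤ η i) ∧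
      (∀ i ∈ Finset.Icc 1 (M - 1), η i ≤ η (i + 1)) ∧
      (∀ i ∈ Finset.Icc 1 (M - 1), a i ∈ Set.Icc (0:ℝ) 1) ∧
      (∀ i ∈ Finset.Icc 1 (M - 2), a i ≤ a (i + 1)) ∧
      |(∫ u in Set.Icc (0:ℝ) 1, q u * σ u) -
        ∫ u in Set.Icc (0:ℝ) 1, q u * (η 1 + ∑ i ∈ Finset.Icc 1 (M - 1),
          (η (i + 1) - η i) * (if a i ≤ u then (1:ℝ) else 0))| ≤
      Cmax * σ 1 / ((1 - γ) * M) :=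
  stmt_6_general M hM Cmax γ σ hσm hσn q hqmeas hq
end

section
/- For the piecewise-linear function g_β(x) = η₁ x + Σ_{i=1}^{M-1}(η_{i+1} - η_i)(x - β[i])₊ with 0 ≤ η₁ ≤ ... ≤ η_M and β[1] ≤ ... ≤ β[M-1], and for the step spectrum σ̃ taking values in {η₁,...,η_M}, the convex conjugate satisfies g_β*(η_j) = Σ_{i=1}^{j-1} (η_{i+1} - η_i) β[i] for each j = 1, ..., M (with the convention that the empty sum is 0), provided β[i] ≥ 0. -/
/-!
With `cᵢ = η (i+1) - η i ≥ 0`, telescoping gives `η j - η 1 = ∑_{i<j} cᵢ`, so the objective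
`x η j - g_β x` equals `∑_{i<j} cᵢ min x βᵢ - ∑_{i≥j} cᵢ (x - βᵢ)₊`. Every term of the first
sum is at most `cᵢ βᵢ` and every term of the second is nonnegative, with equality throughout for
any `x` between `β (j-1)` and `β j`; such an `x` exists because `β` is monotone.
-/

open Finset

lemma sub_max_sub_zero {α : Type*} [AddCommGroup α] [LinearOrder α] [IsOrderedAddMonoid α]
    (x b : α) : x - max (x - b) 0 = min x b := by
  rcases le_total x b with h | h
  · rw [max_eq_right (sub_nonpos.2 h), min_eq_left h, sub_zero]
  · rw [max_eq_left (sub_nonneg.2 h), min_eq_right h, sub_sub_cancel]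

lemma monotoneOn_Icc_of_le_add_one {α : Type*} [Preorder α] {β : ℕ → α} {a b : ℕ}
    (hβ : ∀ i ∈ Icc a (b - 1), β i ≤ β (i + 1)) : MonotoneOn β (Set.Icc a b) :=
  monotoneOn_of_le_succ Set.ordConnected_Icc fun i _ hi hi' => by
    simp only [Set.mem_Icc, Order.succ_eq_add_one] at hi hi' ⊢
    exact hβ i (mem_Icc.2 ⟨hi.1, by omega⟩)

lemma MonotoneOn.exists_ge_Icc_le_Ioc {α : Type*} [Preorder α] {β : ℕ → α} {n m : ℕ}
    (hβ : MonotoneOn β (Set.Icc 1 m)) (hnm : n ≤ m) :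
    ∃ x, (∀ i ∈ Icc 1 n, β i ≤ x) ∧ ∀ i ∈ Ioc n m, x ≤ β i := by
  refine ⟨β (max n 1), fun i hi => ?_, fun i hi => ?_⟩ <;>
    simp only [mem_Icc, mem_Ioc] at hi <;>
    exact hβ (by simp only [Set.mem_Icc]; omega) (by simp only [Set.mem_Icc]; omega) (by omega)

section Conjugate

variable (η β : ℕ → ℝ) {n m : ℕ}

lemma mul_sub_hinge_sum_eq (hnm : n ≤ m) (x : ℝ) :
    x * η (n + 1) - (η 1 * x + ∑ i ∈ Icc 1 m, (η (i + 1) - η i) * max (x - β i) 0)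
      = ∑ i ∈ Icc 1 n, (η (i + 1) - η i) * min x (β i)
        - ∑ i ∈ Ioc n m, (η (i + 1) - η i) * max (x - β i) 0 := by
  have htelescope : η (n + 1) - η 1 = ∑ i ∈ Icc 1 n, (η (i + 1) - η i) := by
    rw [← Ico_add_one_right_eq_Icc, sum_Ico_sub η (by omega)]
  have hsplit : ∀ f : ℕ → ℝ, ∑ i ∈ Icc 1 m, f i = ∑ i ∈ Icc 1 n, f i + ∑ i ∈ Ioc n m, f i :=
    fun f => by
      rw [← zero_add 1, Icc_add_one_left_eq_Ioc, Icc_add_one_left_eq_Ioc,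
        sum_Ioc_consecutive f (Nat.zero_le n) hnm]
  have hmin : ∑ i ∈ Icc 1 n, (η (i + 1) - η i) * min x (β i)
      = (η (n + 1) - η 1) * x - ∑ i ∈ Icc 1 n, (η (i + 1) - η i) * max (x - β i) 0 := by
    simp only [htelescope, sum_mul, ← sum_sub_distrib, ← mul_sub, sub_max_sub_zero]
  rw [hsplit, hmin]
  ring

variable {η β}

lemma mul_sub_hinge_sum_le (hη : ∀ i ∈ Icc 1 m, η i ≤ η (i + 1)) (hnm : n ≤ m) (x : ℝ) :
    x * η (n + 1) - (η 1 * x + ∑ i ∈ Icc 1 m, (η (i + 1) - η i) * max (x - β i) 0)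
      ≤ ∑ i ∈ Icc 1 n, (η (i + 1) - η i) * β i := by
  have hc : ∀ i ∈ Icc 1 m, 0 ≤ η (i + 1) - η i := fun i hi => sub_nonneg.2 (hη i hi)
  rw [mul_sub_hinge_sum_eq η β hnm]
  have hmin : ∑ i ∈ Icc 1 n, (η (i + 1) - η i) * min x (β i)
      ≤ ∑ i ∈ Icc 1 n, (η (i + 1) - η i) * β i :=
    sum_le_sum fun i hi =>
      mul_le_mul_of_nonneg_left (min_le_right _ _) (hc i (Icc_subset_Icc_right hnm hi))
  have hmax : 0 ≤ ∑ i ∈ Ioc n m, (η (i + 1) - η i) * max (x - β i) 0 :=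
    sum_nonneg fun i hi => mul_nonneg
      (hc i (by simp only [mem_Ioc, mem_Icc] at hi ⊢; omega)) (le_max_right _ _)
  exact (sub_le_self _ hmax).trans hmin

lemma mul_sub_hinge_sum_eq_of_between (hnm : n ≤ m) {x : ℝ}
    (hlow : ∀ i ∈ Icc 1 n, β i ≤ x) (hhigh : ∀ i ∈ Ioc n m, x ≤ β i) :
    x * η (n + 1) - (η 1 * x + ∑ i ∈ Icc 1 m, (η (i + 1) - η i) * max (x - β i) 0)
      = ∑ i ∈ Icc 1 n, (η (i + 1) - η i) * β i := by
  have hmin : ∑ i ∈ Icc 1 n, (η (i + 1) - η i) * min x (β i)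
      = ∑ i ∈ Icc 1 n, (η (i + 1) - η i) * β i :=
    sum_congr rfl fun i hi => by rw [min_eq_right (hlow i hi)]
  have hmax : ∑ i ∈ Ioc n m, (η (i + 1) - η i) * max (x - β i) 0 = 0 :=
    sum_eq_zero fun i hi => by rw [max_eq_right (sub_nonpos.2 (hhigh i hi)), mul_zero]
  rw [mul_sub_hinge_sum_eq η β hnm, hmin, hmax, sub_zero]

end Conjugate

theorem stmt_9_general (M : ℕ) (η β : ℕ → ℝ)
    (hηmono : ∀ i ∈ Finset.Icc 1 (M - 1), η i ≤ η (i + 1))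
    (hβmono : ∀ i ∈ Finset.Icc 1 (M - 2), β i ≤ β (i + 1))
    (j : ℕ) (hj : 1 ≤ j) (hjM : j ≤ M) :
    IsLUB (Set.range fun x : ℝ =>
        x * η j - (η 1 * x + ∑ i ∈ Finset.Icc 1 (M - 1),
          (η (i + 1) - η i) * max (x - β i) 0))
      (∑ i ∈ Finset.Icc 1 (j - 1), (η (i + 1) - η i) * β i) := by
  obtain ⟨n, rfl⟩ : ∃ n, j = n + 1 := ⟨j - 1, by omega⟩
  obtain ⟨m, rfl⟩ : ∃ m, M = m + 1 := ⟨M - 1, by omega⟩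
  have hnm : n ≤ m := by omega
  simp only [Nat.add_sub_cancel] at hηmono ⊢
  have hβ : MonotoneOn β (Set.Icc 1 m) := monotoneOn_Icc_of_le_add_one (by simpa using hβmono)
  obtain ⟨x₀, hlow, hhigh⟩ := hβ.exists_ge_Icc_le_Ioc hnm
  refine IsGreatest.isLUB ⟨⟨x₀, mul_sub_hinge_sum_eq_of_between hnm hlow hhigh⟩, ?_⟩
  rintro _ ⟨x, rfl⟩
  exact mul_sub_hinge_sum_le hηmono hnm x

theorem stmt_9 (M : ℕ) (hM : 1 ≤ M) (η β : ℕ → ℝ)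
    (hη0 : 0 ≤ η 1) (hηmono : ∀ i ∈ Finset.Icc 1 (M - 1), η i ≤ η (i + 1))
    (hβmono : ∀ i ∈ Finset.Icc 1 (M - 2), β i ≤ β (i + 1))
    (hβ0 : ∀ i ∈ Finset.Icc 1 (M - 1), 0 ≤ β i)
    (j : ℕ) (hj : 1 ≤ j) (hjM : j ≤ M) :
    IsLUB (Set.range fun x : ℝ =>
        x * η j - (η 1 * x + ∑ i ∈ Finset.Icc 1 (M - 1),
          (η (i + 1) - η i) * max (x - β i) 0))
      (∑ i ∈ Finset.Icc 1 (j - 1), (η (i + 1) - η i) * β i) :=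
  stmt_9_general M η β hηmono hβmono j hj hjM
end

section
/- Under the softmax policy parameterization π_θ(a|s) ∝ exp(θ(s,a)) over a finite action set, suppose the parameter increment Δ(s,a) = θ_{t+1}(s,a) - θ_t(s,a) has zero mean under π_t(·|s) for each s. Then the total variation distance satisfies D_TV(π_{t+1}(·|s), π_t(·|s)) ≤ max_a |θ_{t+1}(s,a) - θ_t(s,a)|. -/
/-!
Write `p = q e^Δ / Z` for the exponential tilt of `q` by `Δ`. Since `log p - log q = Δ - log Z`
and both `p` and `q` sum to one, the Jeffreys divergence `∑ (p - q) (log p - log q)` equals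
`∑ (p - q) Δ ≤ max |Δ| · ‖p - q‖₁`. On the other hand the elementary inequality
`(x - y)² / (x + y) ≤ (x - y) (log x - log y)` and Sedrakyan's form of Cauchy–Schwarz bound it
below by `‖p - q‖₁² / 2`. Hence `‖p - q‖₁ ≤ 2 max |Δ|`.
-/

open Real Finset

noncomputable section

variable {A : Type*} [Fintype A]

def expTilt (q Δ : A → ℝ) (a : A) : ℝ :=
  q a * exp (Δ a) / ∑ a', q a' * exp (Δ a')

def jeffreys (p q : A → ℝ) : ℝ :=
  ∑ a, (p a - q a) * (log (p a) - log (q a))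

lemma sq_sub_div_add_le_mul_log_sub_log {x y : ℝ} (hx : 0 < x) (hy : 0 < y) :
    (x - y) ^ 2 / (x + y) ≤ (x - y) * (log x - log y) := by
  wlog hyx : y ≤ x generalizing x y
  · convert this hy hx (le_of_not_ge hyx) using 1 <;> ring
  have hlog : (x - y) / x ≤ log x - log y := by
    rw [← log_div hx.ne' hy.ne']
    convert one_sub_inv_le_log_of_pos (div_pos hx hy) using 1
    field_simp
  calc (x - y) ^ 2 / (x + y) ≤ (x - y) ^ 2 / x :=
        div_le_div_of_nonneg_left (sq_nonneg _) hx (by linarith)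
    _ = (x - y) * ((x - y) / x) := by ring
    _ ≤ (x - y) * (log x - log y) := mul_le_mul_of_nonneg_left hlog (by linarith)

lemma sq_sum_abs_sub_le_two_mul_jeffreys {p q : A → ℝ} (hp : ∀ a, 0 < p a) (hq : ∀ a, 0 < q a)
    (hp1 : ∑ a, p a = 1) (hq1 : ∑ a, q a = 1) :
    (∑ a, |p a - q a|) ^ 2 ≤ 2 * jeffreys p q := by
  have hpq : ∀ a ∈ univ, 0 < p a + q a := fun a _ ↦ add_pos (hp a) (hq a)
  have hsedrakyan := sq_sum_div_le_sum_sq_div univ (fun a ↦ |p a - q a|) hpq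
  rw [sum_add_distrib, hp1, hq1] at hsedrakyan
  simp only [sq_abs] at hsedrakyan
  have hlog : ∑ a, (p a - q a) ^ 2 / (p a + q a) ≤ jeffreys p q :=
    sum_le_sum fun a _ ↦ sq_sub_div_add_le_mul_log_sub_log (hp a) (hq a)
  linarith

lemma sum_mul_le_iSup_abs_mul_sum_abs (f g : A → ℝ) :
    ∑ a, f a * g a ≤ (⨆ a, |g a|) * ∑ a, |f a| := by
  rw [mul_sum]
  refine sum_le_sum fun a _ ↦ ?_
  have hg : |g a| ≤ ⨆ a, |g a| := le_ciSup (f := fun a ↦ |g a|) (Set.finite_range _).bddAbove a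
  calc f a * g a ≤ |f a| * |g a| := by rw [← abs_mul]; exact le_abs_self _
    _ ≤ |f a| * ⨆ a, |g a| := mul_le_mul_of_nonneg_left hg (abs_nonneg _)
    _ = (⨆ a, |g a|) * |f a| := mul_comm _ _

section Tilt

variable [Nonempty A] {q : A → ℝ} (Δ : A → ℝ)

lemma expTilt_normalizer_pos (hq : ∀ a, 0 < q a) : 0 < ∑ a, q a * exp (Δ a) :=
  sum_pos (fun a _ ↦ mul_pos (hq a) (exp_pos _)) univ_nonempty

lemma expTilt_pos (hq : ∀ a, 0 < q a) (a : A) : 0 < expTilt q Δ a :=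
  div_pos (mul_pos (hq a) (exp_pos _)) (expTilt_normalizer_pos Δ hq)

lemma sum_expTilt (hq : ∀ a, 0 < q a) : ∑ a, expTilt q Δ a = 1 := by
  simp only [expTilt, ← sum_div, div_self (expTilt_normalizer_pos Δ hq).ne']

lemma log_expTilt_sub_log (hq : ∀ a, 0 < q a) (a : A) :
    log (expTilt q Δ a) - log (q a) = Δ a - log (∑ a', q a' * exp (Δ a')) := by
  rw [expTilt, log_div (mul_pos (hq a) (exp_pos _)).ne' (expTilt_normalizer_pos Δ hq).ne',
    log_mul (hq a).ne' (exp_ne_zero _), log_exp]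
  ring

lemma jeffreys_expTilt (hq : ∀ a, 0 < q a) (hq1 : ∑ a, q a = 1) :
    jeffreys (expTilt q Δ) q = ∑ a, (expTilt q Δ a - q a) * Δ a := by
  simp only [jeffreys, log_expTilt_sub_log Δ hq, mul_sub, sum_sub_distrib, ← sum_mul,
    sum_expTilt Δ hq, hq1, sub_self, zero_mul, sub_zero]

end Tilt

end

theorem stmt_12_general {A : Type*} [Fintype A] [Nonempty A]
    (πt Δ : A → ℝ) (hpos : ∀ a, 0 < πt a) (hsum : ∑ a, πt a = 1) :
    (1 / 2) * ∑ a, |πt a * Real.exp (Δ a) / (∑ a', πt a' * Real.exp (Δ a')) - πt a| ≤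
      ⨆ a, |Δ a| := by
  change (1 / 2) * ∑ a, |expTilt πt Δ a - πt a| ≤ ⨆ a, |Δ a|
  set T := ∑ a, |expTilt πt Δ a - πt a|
  set M := ⨆ a, |Δ a|
  have hT : T ^ 2 ≤ 2 * M * T := by
    calc T ^ 2 ≤ 2 * jeffreys (expTilt πt Δ) πt :=
          sq_sum_abs_sub_le_two_mul_jeffreys (expTilt_pos Δ hpos) hpos (sum_expTilt Δ hpos) hsum
      _ ≤ 2 * (M * T) := by
          rw [jeffreys_expTilt Δ hpos hsum]
          gcongr
          exact sum_mul_le_iSup_abs_mul_sum_abs _ _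
      _ = 2 * M * T := by ring
  have hM : 0 ≤ M := Real.iSup_nonneg fun a ↦ abs_nonneg _
  have hT0 : 0 ≤ T := sum_nonneg fun a _ ↦ abs_nonneg _
  nlinarith

theorem stmt_12 {A : Type*} [Fintype A] [Nonempty A]
    (πt Δ : A → ℝ) (hpos : ∀ a, 0 < πt a) (hsum : ∑ a, πt a = 1)
    (hmean : ∑ a, πt a * Δ a = 0) :
    (1 / 2) * ∑ a, |πt a * Real.exp (Δ a) / (∑ a', πt a' * Real.exp (Δ a')) - πt a| ≤
      ⨆ a, |Δ a| :=
  stmt_12_general πt Δ hpos hsum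
end
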